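/- The function f(k) := ∫₀¹ arcsin(√(u·(2−ku)/(2+k(1−2u)))) du − π/4 satisfies f(0) = 0 and f is nonincreasing on [0,2]; consequently f(k) ≤ 0 for all k ∈ [0,2]. -/

import Mathlib

/-!
At `k = 0` the integrand is `arcsin √u`, and the reflection `u ↦ 1 - u` turns it into
`arccos √u = π/2 - arcsin √u`, so its integral over `[0,1]` is `π/4`. Monotonicity is pointwise:
cross-multiplying, the integrand's argument at `k₁` minus that at `k₂` has numerator
`2u(1-u)(k₂-k₁)`, so it decreases in `k`.
-/

open Real

/-- `f(k) = ∫₀¹ arcsin √(u(2−ku)/(2+k(1−2u))) du − π/4`. -/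
noncomputable def ffun (k : ℝ) : ℝ :=
  (∫ u in Set.Ioc (0 : ℝ) 1,
    Real.arcsin (Real.sqrt (u * (2 - k * u) / (2 + k * (1 - 2 * u))))) - π / 4

open MeasureTheory Set

theorem Real.arcsin_sqrt_one_sub {x : ℝ} (hx : 0 ≤ x) :
    arcsin √(1 - x) = π / 2 - arcsin √x := by
  rw [← arccos_eq_pi_div_two_sub_arcsin, arccos_eq_arcsin (sqrt_nonneg x), sq_sqrt hx]

theorem integral_arcsin_sqrt : ∫ x in (0 : ℝ)..1, arcsin √x = π / 4 := by
  set I := ∫ x in (0 : ℝ)..1, arcsin √x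
  have hint : IntervalIntegrable (fun x => arcsin √x) volume 0 1 :=
    (continuous_arcsin.comp continuous_sqrt).intervalIntegrable 0 1
  have hreflect : I = π / 2 - I :=
    calc I = ∫ x in (0 : ℝ)..1, arcsin √(1 - x) := by
          simp [intervalIntegral.integral_comp_sub_left (fun x => arcsin √x) 1, I]
      _ = ∫ x in (0 : ℝ)..1, (π / 2 - arcsin √x) := by
          refine intervalIntegral.integral_congr fun x hx => ?_
          rw [uIcc_of_le zero_le_one] at hx
          exact arcsin_sqrt_one_sub hx.1
      _ = π / 2 - I := by
          rw [intervalIntegral.integral_sub intervalIntegrable_const hint]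
          simp [I]
  linarith

theorem integrableOn_arcsin_comp {g : ℝ → ℝ} (hg : Measurable g) {s : Set ℝ}
    (hs : volume s ≠ ⊤) : IntegrableOn (fun x => arcsin (g x)) s := by
  refine Measure.integrableOn_of_bounded (M := π / 2) hs
    (continuous_arcsin.measurable.comp hg).aestronglyMeasurable (ae_of_all _ fun x => ?_)
  rw [norm_eq_abs, abs_le]
  exact ⟨neg_pi_div_two_le_arcsin _, arcsin_le_pi_div_two _⟩

theorem ffun_radicand_antitone {k₁ k₂ u : ℝ} (hk₁ : 0 ≤ k₁) (hk : k₁ ≤ k₂) (hk₂ : k₂ ≤ 2)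
    (hu₀ : 0 ≤ u) (hu₁ : u ≤ 1) :
    u * (2 - k₂ * u) / (2 + k₂ * (1 - 2 * u)) ≤ u * (2 - k₁ * u) / (2 + k₁ * (1 - 2 * u)) := by
  have hnum₁ : 0 ≤ u * (2 - k₁ * u) := mul_nonneg hu₀ (by nlinarith)
  have hden₁ : 0 ≤ 2 + k₁ * (1 - 2 * u) := by nlinarith
  have hden₂ : 0 ≤ 2 + k₂ * (1 - 2 * u) := by nlinarith
  -- the denominator at `k₂` vanishes only for `k₂ = 2`, `u = 1`, where the left side is junk `0`
  rcases hden₂.eq_or_lt with hzero | hpos₂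
  · rw [← hzero, div_zero]
    exact div_nonneg hnum₁ hden₁
  have hpos₁ : 0 < 2 + k₁ * (1 - 2 * u) := by
    rcases le_or_gt 0 (1 - 2 * u) with hv | hv
    · nlinarith
    · nlinarith [mul_le_mul_of_nonpos_right hk hv.le]
  rw [div_le_div_iff₀ hpos₂ hpos₁, ← sub_nonneg]
  have hcross : u * (2 - k₁ * u) * (2 + k₂ * (1 - 2 * u))
      - u * (2 - k₂ * u) * (2 + k₁ * (1 - 2 * u)) = 2 * u * (1 - u) * (k₂ - k₁) := by ring
  rw [hcross]
  have := sub_nonneg.2 hk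
  have := sub_nonneg.2 hu₁
  positivity

theorem ffun_zero : ffun 0 = 0 := by
  simp only [ffun, zero_mul, sub_zero, add_zero, mul_div_cancel_right₀ _ (two_ne_zero' ℝ)]
  rw [← intervalIntegral.integral_of_le zero_le_one, integral_arcsin_sqrt, sub_self]

theorem ffun_antitoneOn : AntitoneOn ffun (Icc 0 2) := by
  intro k₁ hk₁ k₂ hk₂ hk
  have hint (k : ℝ) := integrableOn_arcsin_comp (s := Ioc 0 1)
    (g := fun u => √(u * (2 - k * u) / (2 + k * (1 - 2 * u)))) (by fun_prop)
    (by simp [volume_Ioc])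
  refine sub_le_sub_right (setIntegral_mono_on (hint k₂) (hint k₁) measurableSet_Ioc
    fun u hu => ?_) _
  exact monotone_arcsin (sqrt_le_sqrt (ffun_radicand_antitone hk₁.1 hk hk₂.2 hu.1.le hu.2))

/-- `f(0) = 0`, `f` is nonincreasing on `[0,2]`, and consequently
`f(k) ≤ 0` for all `k ∈ [0,2]`. -/
theorem ffun_nonpos :
    ffun 0 = 0 ∧ AntitoneOn ffun (Set.Icc 0 2) ∧
      ∀ k ∈ Set.Icc (0 : ℝ) 2, ffun k ≤ 0 :=
  ⟨ffun_zero, ffun_antitoneOn, fun _ hk =>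
    (ffun_antitoneOn ⟨le_rfl, zero_le_two⟩ hk hk.1).trans_eq ffun_zero⟩
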